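/- Let A > 0 and 0 < ε < 1. There are constants C and k₀ depending only on A and ε with the following property. Let k ≥ k₀ be an integer, and let λ(p), λ(p²) be real numbers defined for each prime p satisfying the Hecke relation λ(p)² = λ(p²) + 1 and the Deligne bound |λ(p)| ≤ 2. Let L₁ > 0 satisfy exp( Σ_{p ≤ k} λ(p²)/p ) ≤ A (log log k)³ L₁. Then M := (1/((log k)² L₁)) · ∏_{p ≤ k} (1 + 2|λ(p)|/p) satisfies M ≤ C (log k)^{ε} exp( − Σ_{p ≤ k} (|λ(p)| − 1)²/p ), where sums and products run over primes p ≤ k. -/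

import Mathlib

/-!
Since `2|λ(p)| = λ(p²) + 2 - (|λ(p)| - 1)²` and `1 + t ≤ exp t`, the product is at most
`exp (∑ λ(p²)/p) * exp (2 ∑ 1/p) * exp (-∑ (|λ(p)| - 1)²/p)`. The first factor is controlled by
the hypothesis together with `(log log k)³ ≤ (log k)^ε` for large `k`, the second by Mertens'
estimate `∑_{p ≤ k} 1/p ≤ log log k + O(1)`. That estimate follows by partial summation from
`∑_{p ≤ n} log p / p ≤ log n + log 4`, which comes from `p ^ ⌊n/p⌋ ∣ n!` and Chebyshev's bound
`θ(n) ≤ n log 4`.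
-/

open Finset Real Filter
open scoped Nat

theorem div_le_factorization_factorial {p : ℕ} (hp : p.Prime) (n : ℕ) :
    n / p ≤ (n !).factorization p := by
  have hdvd : (p * (n / p))! ∣ n ! := Nat.factorial_dvd_factorial (Nat.mul_div_le n p)
  calc n / p ≤ (n / p)!.factorization p + n / p := Nat.le_add_left _ _
    _ = (p * (n / p))!.factorization p := (Nat.factorization_factorial_mul hp).symm
    _ ≤ (n !).factorization p :=
      (Nat.factorization_le_iff_dvd (Nat.factorial_ne_zero _) (Nat.factorial_ne_zero _)).2 hdvd p

theorem log_factorial_eq_sum_primesLE (n : ℕ) :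
    log (n ! : ℕ) = ∑ p ∈ Nat.primesLE n, ((n !).factorization p : ℝ) * log p := by
  rw [log_nat_eq_sum_factorization, Finsupp.sum_of_support_subset _ ?_ _ (by simp)]
  intro p hp
  rw [Nat.support_factorization, Nat.mem_primeFactors] at hp
  exact Nat.mem_primesLE.2 ⟨(hp.1.dvd_factorial).1 hp.2.1, hp.1⟩

theorem sum_primesLE_div_mul_log_le (n : ℕ) :
    ∑ p ∈ Nat.primesLE n, ((n / p : ℕ) : ℝ) * log p ≤ n * log n := by
  calc ∑ p ∈ Nat.primesLE n, ((n / p : ℕ) : ℝ) * log p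
      ≤ ∑ p ∈ Nat.primesLE n, ((n !).factorization p : ℝ) * log p := by
        gcongr with p hp
        exact_mod_cast div_le_factorization_factorial (Nat.prime_of_mem_primesLE hp) n
    _ = log (n ! : ℕ) := (log_factorial_eq_sum_primesLE n).symm
    _ ≤ log (n ^ n : ℕ) :=
        log_le_log (by exact_mod_cast n.factorial_pos) (by exact_mod_cast n.factorial_le_pow)
    _ = n * log n := by push_cast; rw [log_pow]

theorem sum_primesLE_log_div_le (n : ℕ) :
    ∑ p ∈ Nat.primesLE n, log p / p ≤ log n + log 4 := by
  rcases n.eq_zero_or_pos with rfl | hn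
  · simpa using log_nonneg (by norm_num : (1 : ℝ) ≤ 4)
  have hθ : ∑ p ∈ Nat.primesLE n, log p ≤ n * log 4 := by
    rw [← Chebyshev.theta_eq_sum_primesLE_log, mul_comm]
    exact Chebyshev.theta_le_log4_mul_x n.cast_nonneg
  have hfloor : ∀ p ∈ Nat.primesLE n, n * (log p / p) ≤ ((n / p : ℕ) : ℝ) * log p + log p := by
    intro p hp
    have hlt := Nat.sub_one_lt_floor ((n : ℝ) / p)
    rw [Nat.floor_div_eq_div] at hlt
    have hp0 : (0 : ℝ) < p := by exact_mod_cast (Nat.prime_of_mem_primesLE hp).pos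
    calc (n : ℝ) * (log p / p) = (n / p - 1) * log p + log p := by field_simp; ring
      _ ≤ ((n / p : ℕ) : ℝ) * log p + log p := by gcongr
  have hn' : (0 : ℝ) < n := by exact_mod_cast hn
  refine le_of_mul_le_mul_left ?_ hn'
  calc (n : ℝ) * ∑ p ∈ Nat.primesLE n, log p / p
      ≤ ∑ p ∈ Nat.primesLE n, (((n / p : ℕ) : ℝ) * log p + log p) := by
        rw [mul_sum]; exact sum_le_sum hfloor
    _ ≤ n * log n + n * log 4 := by
        rw [sum_add_distrib]; exact add_le_add (sum_primesLE_div_mul_log_le n) hθ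
    _ = n * (log n + log 4) := by ring

/-- Discrete counterpart of `(log log x - c / log x)' = (log x + c) / (x log² x)`. -/
theorem mul_inv_log_sub_inv_log_le {s x y : ℝ} (c : ℝ) (hs : s ≤ log x + c) (hx : 1 < x)
    (hxy : x ≤ y) :
    s * ((log x)⁻¹ - (log y)⁻¹) ≤ (log (log y) - c / log y) - (log (log x) - c / log x) := by
  have hlx : 0 < log x := log_pos hx
  have hly : 0 < log y := log_pos (hx.trans_le hxy)
  have hconc := one_sub_inv_le_log_of_pos (div_pos hly hlx)
  rw [log_div hly.ne' hlx.ne', inv_div] at hconc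
  have hexpand : (log x + c) * ((log x)⁻¹ - (log y)⁻¹)
      = (1 - log x / log y) + (c / log x - c / log y) := by
    field_simp
  have hinv : 0 ≤ (log x)⁻¹ - (log y)⁻¹ :=
    sub_nonneg.2 (inv_anti₀ hlx (log_le_log (by linarith) hxy))
  linarith [mul_le_mul_of_nonneg_right hs hinv]

theorem sum_primesLE_inv_sub_succ (k : ℕ) :
    (∑ p ∈ Nat.primesLE (k + 1), (1 : ℝ) / p
        - (∑ p ∈ Nat.primesLE (k + 1), log p / p) / log (k + 1 : ℕ))
      - (∑ p ∈ Nat.primesLE k, (1 : ℝ) / p - (∑ p ∈ Nat.primesLE k, log p / p) / log k)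
      = (∑ p ∈ Nat.primesLE k, log p / p) * ((log k)⁻¹ - (log (k + 1 : ℕ))⁻¹) := by
  rw [Nat.primesLE_succ]
  split_ifs with hp
  · rw [sum_insert (Nat.notMem_primesLE k), sum_insert (Nat.notMem_primesLE k)]
    have hlog : log (k + 1 : ℕ) ≠ 0 := (log_pos (by exact_mod_cast hp.one_lt)).ne'
    field_simp
    ring
  · ring

theorem sum_primesLE_inv_le {k : ℕ} (hk : 2 ≤ k) :
    ∑ p ∈ Nat.primesLE k, (1 : ℝ) / p ≤ log (log k) + 3 - log (log 2) := by
  set S : ℕ → ℝ := fun n ↦ ∑ p ∈ Nat.primesLE n, log p / p with hS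
  set F : ℕ → ℝ := fun n ↦ log (log n) - log 4 / log n with hF
  have hR : ∀ n, 2 ≤ n → ∑ p ∈ Nat.primesLE n, (1 : ℝ) / p - S n / log n ≤ F n - F 2 := by
    intro n hn
    induction n, hn using Nat.le_induction with
    | base =>
      simp [hS, show Nat.primesLE 2 = {2} by decide, div_right_comm _ (2 : ℝ),
        div_self (log_pos one_lt_two).ne']
    | succ n hn ih =>
      have hstep := mul_inv_log_sub_inv_log_le (log 4) (sum_primesLE_log_div_le n)
        (y := (n + 1 : ℕ)) (by exact_mod_cast hn) (by push_cast; linarith)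
      linarith [sum_primesLE_inv_sub_succ n]
  have hlogk : 0 < log k := log_pos (by exact_mod_cast hk)
  have hlog4 : log 4 / log 2 = 2 := by
    rw [show (4 : ℝ) = 2 ^ 2 by norm_num, log_pow]
    field_simp [(log_pos one_lt_two).ne']
    norm_num
  have hSk : S k / log k ≤ 1 + log 4 / log k := by
    rw [div_le_iff₀ hlogk, add_mul, div_mul_cancel₀ _ hlogk.ne', one_mul]
    exact sum_primesLE_log_div_le k
  have h2 := hR k hk
  simp only [hF] at h2
  push_cast at h2
  linarith

theorem exp_two_mul_sum_primesLE_inv_le {k : ℕ} (hk : 2 ≤ k) :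
    exp (2 * ∑ p ∈ Nat.primesLE k, (1 : ℝ) / p) ≤ exp (2 * (3 - log (log 2))) * log k ^ 2 := by
  have hlogk : 0 < log k := log_pos (by exact_mod_cast hk)
  calc exp (2 * ∑ p ∈ Nat.primesLE k, (1 : ℝ) / p)
      ≤ exp (2 * (3 - log (log 2)) + (log (log k) + log (log k))) := by
        gcongr
        linarith [sum_primesLE_inv_le hk]
    _ = exp (2 * (3 - log (log 2))) * log k ^ 2 := by
        rw [exp_add, exp_add, exp_log hlogk, sq]

theorem two_mul_abs_eq_of_sq_eq_add_one {x y : ℝ} (h : x ^ 2 = y + 1) :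
    2 * |x| = y + 2 - (|x| - 1) ^ 2 := by
  linear_combination (sq_abs x).trans h

theorem prod_one_add_two_mul_abs_div_le {s : Finset ℕ} {lam lam2 : ℕ → ℝ}
    (hhecke : ∀ p ∈ s, lam p ^ 2 = lam2 p + 1) :
    ∏ p ∈ s, (1 + 2 * |lam p| / p)
      ≤ exp (∑ p ∈ s, lam2 p / p) * exp (2 * ∑ p ∈ s, (1 : ℝ) / p)
          * exp (-∑ p ∈ s, (|lam p| - 1) ^ 2 / p) := by
  rw [← exp_add, ← exp_add, mul_sum, ← sum_add_distrib, ← sum_neg_distrib, ← sum_add_distrib]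
  refine (prod_one_add_le_exp_sum s fun p ↦ by positivity).trans_eq (congrArg exp ?_)
  refine sum_congr rfl fun p hp ↦ ?_
  rw [two_mul_abs_eq_of_sq_eq_add_one (hhecke p hp)]
  ring

theorem eventually_log_log_pow_le_log_rpow {ε : ℝ} (hε : 0 < ε) (n : ℕ) :
    ∀ᶠ k : ℕ in atTop, log (log k) ^ n ≤ log k ^ ε := by
  have hbound := (isLittleO_log_rpow_rpow_atTop (n : ℝ) hε).bound one_pos
  have hreal : ∀ᶠ y : ℝ in atTop, log y ^ n ≤ y ^ ε := by
    filter_upwards [hbound, eventually_ge_atTop 1] with y hy hy1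
    rwa [one_mul, rpow_natCast, norm_of_nonneg (pow_nonneg (log_nonneg hy1) _),
      norm_of_nonneg (rpow_nonneg (zero_le_one.trans hy1) _)] at hy
  exact tendsto_natCast_atTop_atTop.eventually (tendsto_log_atTop.eventually hreal)

theorem inequality_one_two_general (A ε : ℝ) (hA : 0 < A) (hε : 0 < ε) :
    ∃ C : ℝ, ∃ k₀ : ℕ, ∀ (k : ℕ) (lam lam2 : ℕ → ℝ) (L₁ : ℝ),
      k₀ ≤ k →
      (∀ p : ℕ, p.Prime → (lam p) ^ 2 = lam2 p + 1) →
      (∀ p : ℕ, p.Prime → |lam p| ≤ 2) →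
      0 < L₁ →
      Real.exp (∑ p ∈ (Finset.range (k + 1)).filter Nat.Prime, lam2 p / p)
        ≤ A * (Real.log (Real.log k)) ^ 3 * L₁ →
      (1 / ((Real.log k) ^ 2 * L₁)) *
          ∏ p ∈ (Finset.range (k + 1)).filter Nat.Prime, (1 + 2 * |lam p| / p)
        ≤ C * (Real.log k) ^ ε *
            Real.exp (-∑ p ∈ (Finset.range (k + 1)).filter Nat.Prime,
              (|lam p| - 1) ^ 2 / p) := by
  obtain ⟨k₀, hk₀⟩ := eventually_atTop.1
    ((eventually_log_log_pow_le_log_rpow hε 3).and (eventually_ge_atTop 2))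
  refine ⟨A * exp (2 * (3 - log (log 2))), k₀, fun k lam lam2 L₁ hk hhecke _ hL₁ hexp ↦ ?_⟩
  obtain ⟨hloglog, hk2⟩ := hk₀ k hk
  simp only [← Nat.primesLE_eq_filter_range] at hexp ⊢
  have hlogk : 0 < log k := log_pos (by exact_mod_cast hk2)
  rw [one_div, inv_mul_le_iff₀ (by positivity)]
  calc ∏ p ∈ Nat.primesLE k, (1 + 2 * |lam p| / p)
      ≤ exp (∑ p ∈ Nat.primesLE k, lam2 p / p) * exp (2 * ∑ p ∈ Nat.primesLE k, (1 : ℝ) / p)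
          * exp (-∑ p ∈ Nat.primesLE k, (|lam p| - 1) ^ 2 / p) :=
        prod_one_add_two_mul_abs_div_le fun p hp ↦ hhecke p (Nat.prime_of_mem_primesLE hp)
    _ ≤ (A * log k ^ ε * L₁) * (exp (2 * (3 - log (log 2))) * log k ^ 2)
          * exp (-∑ p ∈ Nat.primesLE k, (|lam p| - 1) ^ 2 / p) := by
        gcongr
        · exact hexp.trans (by gcongr)
        · exact exp_two_mul_sum_primesLE_inv_le hk2
    _ = log k ^ 2 * L₁ * (A * exp (2 * (3 - log (log 2))) * log k ^ ε
          * exp (-∑ p ∈ Nat.primesLE k, (|lam p| - 1) ^ 2 / p)) := by ring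

/-- Inequality (1.2) of Holowinsky–Soundararajan: if
`exp(Σ_{p ≤ k} λ(p²)/p) ≤ A (log log k)³ L₁`, then
`M = (1/((log k)² L₁)) ∏_{p ≤ k} (1 + 2|λ(p)|/p)` satisfies
`M ≤ C (log k)^ε exp(−Σ_{p ≤ k} (|λ(p)|−1)²/p)`. -/
theorem inequality_one_two (A ε : ℝ) (hA : 0 < A) (hε : 0 < ε) (hε1 : ε < 1) :
    ∃ C : ℝ, ∃ k₀ : ℕ, ∀ (k : ℕ) (lam lam2 : ℕ → ℝ) (L₁ : ℝ),
      k₀ ≤ k →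
      (∀ p : ℕ, p.Prime → (lam p) ^ 2 = lam2 p + 1) →
      (∀ p : ℕ, p.Prime → |lam p| ≤ 2) →
      0 < L₁ →
      Real.exp (∑ p ∈ (Finset.range (k + 1)).filter Nat.Prime, lam2 p / p)
        ≤ A * (Real.log (Real.log k)) ^ 3 * L₁ →
      (1 / ((Real.log k) ^ 2 * L₁)) *
          ∏ p ∈ (Finset.range (k + 1)).filter Nat.Prime, (1 + 2 * |lam p| / p)
        ≤ C * (Real.log k) ^ ε *
            Real.exp (-∑ p ∈ (Finset.range (k + 1)).filter Nat.Prime,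
              (|lam p| - 1) ^ 2 / p) :=
  inequality_one_two_general A ε hA hε
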